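/- Finite-time decorrelation of scalar observables: for any function A: {0,1}^L → ℝ, any t ≥ 0 and any τ ≥ L, in the stationary process of the DSS one has E[A(z^t) A(z^{t+τ})] = E[A(z^t)] · E[A(z^{t+τ})]. -/

import Mathlib

namespace DSS

/-- A state of the DSS on `L` sites: a stable field `z : Fin L → Bool` together with a
finite multiset `w` of waiting particles (particles past site `L` have left the system). -/
structure State (L : ℕ) where
  z : Fin L → Bool
  w : Multiset (Fin L)

variable {L : ℕ}

/-- The multiset holding the right neighbour of `x`; empty if the particle leaves the system. -/
def succSite (L : ℕ) (x : Fin L) : Multiset (Fin L) :=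
  if h : x.val + 1 < L then {(⟨x.val + 1, h⟩ : Fin L)} else 0

/-- Evolution of a waiting particle at `x` when `z x = 1`: the waiting particle moves to
`x+1` and the stable particle at `x` becomes a waiting particle at `x`. -/
def topple (s : State L) (x : Fin L) : State L :=
  ⟨Function.update s.z x false, s.w + succSite L x⟩

/-- Evolution of a waiting particle at `x` when `z x = 0`, settling branch (probability p). -/
def settle (s : State L) (x : Fin L) : State L :=
  ⟨Function.update s.z x true, s.w.erase x⟩

/-- Evolution of a waiting particle at `x` when `z x = 0`, jumping branch (probability q). -/
def jump (s : State L) (x : Fin L) : State L :=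
  ⟨s.z, s.w.erase x + succSite L x⟩

/-- `stabilizeAux p q R n s c` is the probability that, evolving one waiting particle at a
time (the particle being selected by the rule `R`), the process started from `s` reaches
within `n` elementary steps a stable state whose stable field is `c`. -/
noncomputable def stabilizeAux (p q : ℝ) (R : State L → Option (Fin L)) :
    ℕ → State L → (Fin L → Bool) → ℝ
  | 0, s, c => if s.w = 0 ∧ s.z = c then 1 else 0
  | n + 1, s, c =>
    match R s with
    | none => if s.z = c then 1 else 0
    | some x =>
      if s.z x then stabilizeAux p q R n (topple s x) c
      else p * stabilizeAux p q R n (settle s x) c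
        + q * stabilizeAux p q R n (jump s x) c

/-- The canonical evolution rule: evolve the leftmost waiting particle. -/
def minRule (s : State L) : Option (Fin L) :=
  if h : s.w = 0 then none
  else some (s.w.toFinset.min'
    (Finset.nonempty_iff_ne_empty.mpr (by simpa [Multiset.toFinset_eq_empty] using h)))

/-- A termination measure: the stabilization process started from `s` ends after at most
`fuel s` elementary steps, whatever the rule and the randomness. -/
def potential (s : State L) : ℕ :=
  (s.w.map fun x => L + 1 - x.val).sum + ∑ x : Fin L, (if s.z x then L + 1 - x.val else 0)

def fuel (s : State L) : ℕ := 2 * potential s + Multiset.card s.w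

/-- Add one waiting particle at site `1` (index `0`). -/
def addGrain (r : Fin L → Bool) : State L :=
  ⟨r, if h : 0 < L then {(⟨0, h⟩ : Fin L)} else 0⟩

/-- The driven-dissipative transition kernel `W` of the DSS: add a particle at site 1 and
stabilize. -/
noncomputable def Wker (p q : ℝ) (r r' : Fin L → Bool) : ℝ :=
  stabilizeAux p q minRule (fuel (addGrain r)) (addGrain r) r'

/-- `W` as a matrix on stable configurations. -/
noncomputable def Wmat (p q : ℝ) (L : ℕ) :
    Matrix (Fin L → Bool) (Fin L → Bool) ℝ :=
  Matrix.of fun r r' => Wker p q r r'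

/-- The product Bernoulli(p) measure `ψ(r) = p^(Σ r) q^(L - Σ r)`. -/
noncomputable def psi (p q : ℝ) {L : ℕ} (r : Fin L → Bool) : ℝ :=
  p ^ (Finset.univ.filter fun x => r x = true).card *
    q ^ (L - (Finset.univ.filter fun x => r x = true).card)

end DSS

/-!
Under `minRule` an avalanche sweeps the chain from left to right, and the particles gathered at
a site can be processed together: whatever the site held before, once a particle has visited it
the site ends up occupied with probability `p` (this is where `p + q = 1` enters). So `W` is given
by the left-to-right recursion `sweep`, which also records whether a particle leaves the chain;
let `N = sweepMat p q L false` be the part of `W` in which none leaves.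

Splitting off the last site, `W_{L+1}` is conjugate to `Ω ⊗ W_L + (1 - Ω) ⊗ N_L`, where
`Ω = bernMat p q` is the rank-one matrix whose rows are Bernoulli(p). As `Ω` and `1 - Ω` are
orthogonal idempotents, `W_{L+1}^τ` is conjugate to `Ω ⊗ W_L^τ + (1 - Ω) ⊗ N_L^τ`. An avalanche
from which no particle leaves adds a particle to the chain, so `N_L^{L+1} = 0`, and by induction
on `L` every row of `W_L^τ` is `ψ` once `τ ≥ L`. Hence `z^{t+τ}` is independent of `z^t`.
-/

open scoped Kronecker

theorem Matrix.kronecker_add_one_sub_kronecker_pow {R m n : Type*} [CommRing R] [Fintype m]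
    [DecidableEq m] [Fintype n] [DecidableEq n] {E : Matrix m m R} (hE : IsIdempotentElem E)
    (A B : Matrix n n R) (k : ℕ) :
    (E ⊗ₖ A + (1 - E) ⊗ₖ B) ^ k = E ⊗ₖ (A ^ k) + (1 - E) ⊗ₖ (B ^ k) := by
  induction k with
  | zero =>
    rw [pow_zero, pow_zero, pow_zero, ← Matrix.add_kronecker, add_sub_cancel,
      Matrix.one_kronecker_one]
  | succ k ih =>
    simp only [pow_succ, ih, add_mul, mul_add, ← Matrix.mul_kronecker_mul, hE.eq,
      hE.one_sub.eq, hE.mul_one_sub_self, hE.one_sub_mul_self, Matrix.zero_kronecker, add_zero,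
      zero_add]

theorem Fintype.sum_apply_update_add {ι α M : Type*} [Fintype ι] [DecidableEq ι]
    [AddCommMonoid M] (f : ι → α → M) (z : ι → α) (j : ι) (b : α) :
    ∑ i, f i (Function.update z j b i) + f j (z j) = ∑ i, f i (z i) + f j b := by
  have hoff : ∀ i ∈ ({j}ᶜ : Finset ι), f i (Function.update z j b i) = f i (z i) :=
    fun i hi => by rw [Function.update_of_ne (by simpa using hi)]
  rw [Fintype.sum_eq_add_sum_compl j, Fintype.sum_eq_add_sum_compl j (fun i => f i (z i)),
    Finset.sum_congr rfl hoff, Function.update_self]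
  abel

section RowsEq

variable {ι R : Type*} [Fintype ι] [CommSemiring R]

theorem Matrix.sum_sum_sum_eq_of_rows_eq (μ A : ι → R) (M : Matrix ι ι R) {N : Matrix ι ι R}
    {π : ι → R} (hN : ∀ i j, N i j = π j) :
    ∑ i, ∑ j, ∑ k, μ i * M i j * A j * N j k * A k
      = (∑ i, ∑ j, μ i * M i j * A j) * ∑ k, π k * A k := by
  simp_rw [hN, Finset.sum_mul, Finset.mul_sum, mul_assoc]

theorem Matrix.sum_sum_eq_of_rows_eq (μ A : ι → R) {N : Matrix ι ι R} {π : ι → R}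
    (hN : ∀ i j, N i j = π j) :
    ∑ i, ∑ j, μ i * N i j * A j = (∑ i, μ i) * ∑ j, π j * A j := by
  simp_rw [hN, Finset.sum_mul, Finset.mul_sum, mul_assoc]

end RowsEq

namespace DSS

variable {L : ℕ}

section Bernoulli

variable {p q : ℝ}

noncomputable def bern (p q : ℝ) (b : Bool) : ℝ := if b then p else q

theorem sum_bern (hpq : p + q = 1) : ∑ b, bern p q b = 1 := by
  simpa [bern, add_comm] using hpq

theorem psi_eq_prod (r : Fin L → Bool) : psi p q r = ∏ i, bern p q (r i) := by
  simp only [bern, Finset.prod_ite, Finset.prod_const, psi]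
  congr 2
  have := Finset.card_filter_add_card_filter_not (s := Finset.univ) (fun i => r i = true)
  simp only [Finset.card_univ, Fintype.card_fin] at this
  omega

theorem sum_psi (hpq : p + q = 1) : ∑ r : Fin L → Bool, psi p q r = 1 := by
  simp only [psi_eq_prod, ← Fintype.prod_sum, sum_bern hpq, Finset.prod_const_one]

theorem psi_snoc (r : Fin L → Bool) (b : Bool) :
    psi p q (Fin.snoc r b : Fin (L + 1) → Bool) = psi p q r * bern p q b := by
  simp [psi_eq_prod, Fin.prod_univ_castSucc]

end Bernoulli

/-- `sweep p q x a z c e` is the probability that an avalanche with `a` waiting particles at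
site `x`, none elsewhere and stable field `z`, ends in the stable field `c`, where `e` records
whether some particle leaves the system. -/
noncomputable def sweep (p q : ℝ) (x : ℕ) : ℕ → (Fin L → Bool) → (Fin L → Bool) → Bool → ℝ
  | 0, z, c, e => if z = c ∧ e = false then 1 else 0
  | a + 1, z, c, e =>
    if h : x < L then
      p * sweep p q (x + 1) (a + (z ⟨x, h⟩).toNat) (Function.update z ⟨x, h⟩ true) c e
        + q * sweep p q (x + 1) (a + 1 + (z ⟨x, h⟩).toNat) (Function.update z ⟨x, h⟩ false) c e
    else if z = c ∧ e = true then 1 else 0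
termination_by L - x

section Sweep

variable (p q : ℝ)

theorem sweep_zero (x : ℕ) (z c : Fin L → Bool) (e : Bool) :
    sweep p q x 0 z c e = if z = c ∧ e = false then 1 else 0 := by
  rw [sweep]

theorem sweep_succ_of_lt {x : ℕ} (h : x < L) (a : ℕ) (z c : Fin L → Bool) (e : Bool) :
    sweep p q x (a + 1) z c e =
      p * sweep p q (x + 1) (a + (z ⟨x, h⟩).toNat) (Function.update z ⟨x, h⟩ true) c e
        + q * sweep p q (x + 1) (a + 1 + (z ⟨x, h⟩).toNat) (Function.update z ⟨x, h⟩ false) c e :=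
  by rw [sweep, dif_pos h]

theorem sweep_succ_of_le {x : ℕ} (h : L ≤ x) (a : ℕ) (z c : Fin L → Bool) (e : Bool) :
    sweep p q x (a + 1) z c e = if z = c ∧ e = true then 1 else 0 := by
  rw [sweep, dif_neg h.not_gt]

theorem sweep_add_sweep_of_le {x : ℕ} (h : L ≤ x) (a : ℕ) (z c : Fin L → Bool) :
    sweep p q x a z c true + sweep p q x a z c false = if z = c then 1 else 0 := by
  cases a <;> simp [sweep_zero, sweep_succ_of_le p q h]

/-- Particles reach the last site exactly when they leave the first `L` sites, and they then
leave it occupied with probability `p` whatever it held before. -/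
theorem sweep_snoc {x : ℕ} (hx : x ≤ L) (a : ℕ) (z c : Fin L → Bool) (b b' : Bool) :
    sweep p q x a (Fin.snoc z b : Fin (L + 1) → Bool) (Fin.snoc c b') true
        + sweep p q x a (Fin.snoc z b : Fin (L + 1) → Bool) (Fin.snoc c b') false
      = bern p q b' * sweep p q x a z c true
        + (if b = b' then 1 else 0) * sweep p q x a z c false := by
  match a with
  | 0 =>
    by_cases hzc : z = c <;> by_cases hb : b = b' <;> simp [sweep_zero, Fin.snoc_inj, hzc, hb]
  | a + 1 =>
    rcases hx.lt_or_eq with hx | rfl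
    · have hcast : (⟨x, by omega⟩ : Fin (L + 1)) = Fin.castSucc ⟨x, hx⟩ := rfl
      simp only [sweep_succ_of_lt p q (Nat.lt_succ_of_lt hx), sweep_succ_of_lt p q hx, hcast,
        Fin.snoc_castSucc, ← Fin.snoc_update]
      linear_combination
        p * sweep_snoc (Nat.succ_le_of_lt hx) (a + (z ⟨x, hx⟩).toNat)
          (Function.update z ⟨x, hx⟩ true) c b b'
        + q * sweep_snoc (Nat.succ_le_of_lt hx) (a + 1 + (z ⟨x, hx⟩).toNat)
          (Function.update z ⟨x, hx⟩ false) c b b'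
    · have hlast : (⟨x, Nat.lt_succ_self x⟩ : Fin (x + 1)) = Fin.last x := rfl
      simp only [sweep_succ_of_lt p q (Nat.lt_succ_self x), sweep_succ_of_le p q le_rfl, hlast,
        Fin.update_snoc_last]
      rw [add_add_add_comm, ← mul_add, ← mul_add, sweep_add_sweep_of_le p q le_rfl,
        sweep_add_sweep_of_le p q le_rfl]
      cases b' <;> by_cases hzc : z = c <;> simp [Fin.snoc_inj, hzc, bern]
termination_by L - x

end Sweep

def occupancy (z : Fin L → Bool) : ℕ := ∑ i, (z i).toNat

theorem occupancy_update_add (z : Fin L → Bool) (i : Fin L) (b : Bool) :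
    occupancy (Function.update z i b) + (z i).toNat = occupancy z + b.toNat :=
  Fintype.sum_apply_update_add (fun _ b => b.toNat) z i b

theorem occupancy_le (z : Fin L → Bool) : occupancy z ≤ L :=
  (Finset.sum_le_card_nsmul _ _ 1 fun i _ => Bool.toNat_le (z i)).trans_eq (by simp)

theorem occupancy_of_sweep_false_ne_zero {p q : ℝ} {x a : ℕ} {z c : Fin L → Bool}
    (h : sweep p q x a z c false ≠ 0) : occupancy c = occupancy z + a := by
  match a with
  | 0 =>
    rw [sweep_zero] at h
    simp_all
  | a + 1 =>
    by_cases hx : x < L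
    · rw [sweep_succ_of_lt p q hx] at h
      have hset := occupancy_update_add z ⟨x, hx⟩ true
      have hclear := occupancy_update_add z ⟨x, hx⟩ false
      simp only [Bool.toNat_true, Bool.toNat_false] at hset hclear
      rcases eq_or_ne (sweep p q (x + 1) (a + (z ⟨x, hx⟩).toNat)
          (Function.update z ⟨x, hx⟩ true) c false) 0 with hsettle | hsettle
      · rw [hsettle, mul_zero, zero_add] at h
        have := occupancy_of_sweep_false_ne_zero (right_ne_zero_of_mul h)
        omega
      · have := occupancy_of_sweep_false_ne_zero hsettle
        omega
    · rw [sweep_succ_of_le p q (not_lt.mp hx)] at h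
      simp at h
termination_by L - x

section Fuel

theorem potential_eq (s : State L) :
    potential s = (s.w.map fun y => L + 1 - y.val).sum
      + ∑ y : Fin L, (if s.z y then L + 1 - y.val else 0) := rfl

theorem sum_map_succSite_le (x : Fin L) :
    ((succSite L x).map fun y => L + 1 - y.val).sum ≤ L - x.val := by
  unfold succSite
  split <;> simp

theorem card_succSite_le (x : Fin L) : Multiset.card (succSite L x) ≤ 1 := by
  unfold succSite
  split <;> simp

theorem sum_map_erase_add {w : Multiset (Fin L)} {x : Fin L} (hx : x ∈ w) :
    ((w.erase x).map fun y => L + 1 - y.val).sum + (L + 1 - x.val)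
      = (w.map fun y => L + 1 - y.val).sum := by
  conv_rhs => rw [← Multiset.cons_erase hx]
  simp [add_comm]

theorem fuel_topple_lt {s : State L} {x : Fin L} (hz : s.z x = true) :
    fuel (topple s x) < fuel s := by
  have hzsum : (∑ y, if Function.update s.z x false y then L + 1 - y.val else 0) + (L + 1 - x.val)
      = ∑ y, if s.z y then L + 1 - y.val else 0 := by
    simpa [hz] using
      Fintype.sum_apply_update_add (fun y b => if b then L + 1 - y.val else 0) s.z x false
  have := sum_map_succSite_le x
  have := card_succSite_le x
  simp only [fuel, potential_eq, topple, Multiset.map_add, Multiset.sum_add, Multiset.card_add]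
  omega

theorem fuel_settle_lt {s : State L} {x : Fin L} (hx : x ∈ s.w) (hz : s.z x = false) :
    fuel (settle s x) < fuel s := by
  have hzsum : (∑ y, if Function.update s.z x true y then L + 1 - y.val else 0)
      = (∑ y, if s.z y then L + 1 - y.val else 0) + (L + 1 - x.val) := by
    simpa [hz] using
      Fintype.sum_apply_update_add (fun y b => if b then L + 1 - y.val else 0) s.z x true
  have := sum_map_erase_add hx
  have := Multiset.card_erase_add_one hx
  simp only [fuel, potential_eq, settle]
  omega

theorem fuel_jump_lt {s : State L} {x : Fin L} (hx : x ∈ s.w) : fuel (jump s x) < fuel s := by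
  have := sum_map_erase_add hx
  have := Multiset.card_erase_add_one hx
  have := sum_map_succSite_le x
  have := card_succSite_le x
  simp only [fuel, potential_eq, jump, Multiset.map_add, Multiset.sum_add, Multiset.card_add]
  omega

end Fuel

section Stabilize

variable (p q : ℝ)

theorem minRule_eq_none_iff {s : State L} : minRule s = none ↔ s.w = 0 := by
  unfold minRule
  split <;> simp_all

theorem mem_of_minRule_eq_some {s : State L} {x : Fin L} (h : minRule s = some x) : x ∈ s.w := by
  rw [minRule] at h
  split at h
  · exact absurd h (by simp)
  · rw [← Option.some_inj.mp h]
    exact Multiset.mem_toFinset.mp (Finset.min'_mem _ _)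

theorem minRule_eq_some {s : State L} {x : Fin L} (hx : x ∈ s.w) (hle : ∀ y ∈ s.w, x ≤ y) :
    minRule s = some x := by
  have hs : s.w ≠ 0 := by rintro h; simp [h] at hx
  rw [minRule, dif_neg hs, Option.some_inj]
  exact le_antisymm (Finset.min'_le _ _ (Multiset.mem_toFinset.mpr hx))
    (Finset.le_min' _ _ _ fun y hy => hle y (Multiset.mem_toFinset.mp hy))

theorem stabilizeAux_of_w_eq_zero {s : State L} (hs : s.w = 0) (n : ℕ) (c : Fin L → Bool) :
    stabilizeAux p q minRule n s c = if s.z = c then 1 else 0 := by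
  cases n <;> simp [stabilizeAux, minRule_eq_none_iff.mpr hs, hs]

theorem stabilizeAux_eq_of_fuel_le (c : Fin L → Bool) :
    ∀ m n (s : State L), fuel s ≤ m → fuel s ≤ n →
      stabilizeAux p q minRule m s c = stabilizeAux p q minRule n s c
  | m, n, s, hm, hn => by
    rcases hR : minRule s with _ | x
    · have hs := minRule_eq_none_iff.mp hR
      rw [stabilizeAux_of_w_eq_zero p q hs, stabilizeAux_of_w_eq_zero p q hs]
    have hx := mem_of_minRule_eq_some hR
    have hjump := fuel_jump_lt hx
    obtain ⟨m, rfl⟩ : ∃ k, m = k + 1 := Nat.exists_eq_succ_of_ne_zero (by omega)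
    obtain ⟨n, rfl⟩ : ∃ k, n = k + 1 := Nat.exists_eq_succ_of_ne_zero (by omega)
    simp only [stabilizeAux, hR]
    split_ifs with hz
    · have := fuel_topple_lt hz
      exact stabilizeAux_eq_of_fuel_le c m n _ (by omega) (by omega)
    · have := fuel_settle_lt hx (Bool.of_not_eq_true hz)
      rw [stabilizeAux_eq_of_fuel_le c m n (settle s x) (by omega) (by omega),
        stabilizeAux_eq_of_fuel_le c m n (jump s x) (by omega) (by omega)]
termination_by m => m

noncomputable def stabilize (s : State L) (c : Fin L → Bool) : ℝ :=
  stabilizeAux p q minRule (fuel s) s c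

theorem stabilize_of_w_eq_zero {s : State L} (hs : s.w = 0) (c : Fin L → Bool) :
    stabilize p q s c = if s.z = c then 1 else 0 :=
  stabilizeAux_of_w_eq_zero p q hs _ c

theorem stabilize_of_minRule_eq_some {s : State L} {x : Fin L} (hR : minRule s = some x)
    (c : Fin L → Bool) :
    stabilize p q s c = if s.z x then stabilize p q (topple s x) c
      else p * stabilize p q (settle s x) c + q * stabilize p q (jump s x) c := by
  have hx := mem_of_minRule_eq_some hR
  have hjump := fuel_jump_lt hx
  obtain ⟨k, hk⟩ : ∃ k, fuel s = k + 1 := Nat.exists_eq_succ_of_ne_zero (by omega)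
  rw [stabilize, hk]
  simp only [stabilizeAux, hR]
  split_ifs with hz
  · exact stabilizeAux_eq_of_fuel_le p q c _ _ _ (by have := fuel_topple_lt hz; omega) le_rfl
  · have := fuel_settle_lt hx (Bool.of_not_eq_true hz)
    rw [stabilizeAux_eq_of_fuel_le p q c k _ (settle s x) (by omega) le_rfl,
      stabilizeAux_eq_of_fuel_le p q c k _ (jump s x) (by omega) le_rfl]
    rfl

end Stabilize

section Collapse

variable {p q : ℝ}

def frontState (z : Fin L → Bool) (x : Fin L) (a m : ℕ) : State L :=
  ⟨z, Multiset.replicate a x + m • succSite L x⟩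

@[simp]
theorem frontState_z (z : Fin L → Bool) (x : Fin L) (a m : ℕ) : (frontState z x a m).z = z := rfl

theorem minRule_frontState (z : Fin L → Bool) (x : Fin L) (a m : ℕ) :
    minRule (frontState z x (a + 1) m) = some x := by
  refine minRule_eq_some (Multiset.mem_add.mpr (Or.inl (Multiset.mem_replicate.mpr
    ⟨a.succ_ne_zero, rfl⟩))) fun y hy => ?_
  rcases Multiset.mem_add.mp hy with hy | hy
  · exact (Multiset.eq_of_mem_replicate hy).ge
  · have hy := Multiset.mem_of_mem_nsmul hy
    unfold succSite at hy
    split at hy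
    · rw [Multiset.mem_singleton.mp hy, Fin.le_def]
      exact Nat.le_succ _
    · simp at hy

theorem topple_frontState (z : Fin L → Bool) (x : Fin L) (a m : ℕ) :
    topple (frontState z x a m) x = frontState (Function.update z x false) x a (m + 1) := by
  simp only [topple, frontState, add_assoc, succ_nsmul]

theorem settle_frontState (z : Fin L → Bool) (x : Fin L) (a m : ℕ) :
    settle (frontState z x (a + 1) m) x = frontState (Function.update z x true) x a m := by
  simp only [settle, frontState, Multiset.replicate_succ, Multiset.cons_add,
    Multiset.erase_cons_head]

theorem jump_frontState (z : Fin L → Bool) (x : Fin L) (a m : ℕ) :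
    jump (frontState z x (a + 1) m) x = frontState z x a (m + 1) := by
  simp only [jump, frontState, Multiset.replicate_succ, Multiset.cons_add,
    Multiset.erase_cons_head, add_assoc, succ_nsmul]

/-- Once the site is occupied the next particle topples it back, so only the fate of the last
particle at `x` matters. -/
theorem stabilize_frontState_of_eq_false (hpq : p + q = 1) {z : Fin L → Bool} {x : Fin L}
    (hz : z x = false) (c : Fin L → Bool) : ∀ a m,
    stabilize p q (frontState z x (a + 1) m) c
      = p * stabilize p q (frontState (Function.update z x true) x 0 (m + a)) c
        + q * stabilize p q (frontState z x 0 (m + a + 1)) c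
  | 0, m => by
    rw [stabilize_of_minRule_eq_some p q (minRule_frontState z x 0 m), frontState_z, hz,
      if_neg (by simp), settle_frontState, jump_frontState]
    rfl
  | a + 1, m => by
    have hclear : Function.update z x false = z := Function.update_eq_self_iff.mpr hz.symm
    rw [stabilize_of_minRule_eq_some p q (minRule_frontState z x (a + 1) m), frontState_z, hz,
      if_neg (by simp), settle_frontState, jump_frontState,
      stabilize_of_minRule_eq_some p q (minRule_frontState _ x a m), frontState_z,
      Function.update_self, if_pos rfl, topple_frontState, Function.update_idem, hclear,
      ← add_mul, hpq, one_mul, stabilize_frontState_of_eq_false hpq hz c a (m + 1)]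
    ring_nf

theorem stabilize_frontState (hpq : p + q = 1) (z : Fin L → Bool) (x : Fin L) (a m : ℕ)
    (c : Fin L → Bool) :
    stabilize p q (frontState z x (a + 1) m) c
      = p * stabilize p q (frontState (Function.update z x true) x 0 (m + a + (z x).toNat)) c
        + q * stabilize p q
          (frontState (Function.update z x false) x 0 (m + a + 1 + (z x).toNat)) c := by
  cases hz : z x
  · have hclear : Function.update z x false = z := Function.update_eq_self_iff.mpr hz.symm
    rw [stabilize_frontState_of_eq_false hpq hz, hclear]
    rfl
  · rw [stabilize_of_minRule_eq_some p q (minRule_frontState z x a m), frontState_z, hz, if_pos rfl,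
      topple_frontState, stabilize_frontState_of_eq_false hpq (Function.update_self ..),
      Function.update_idem, Bool.toNat_true]
    ring_nf

end Collapse

section Bridge

variable {p q : ℝ}

def pile (L x a : ℕ) : Multiset (Fin L) :=
  if h : x < L then Multiset.replicate a ⟨x, h⟩ else 0

theorem frontState_zero (z : Fin L → Bool) {x : ℕ} (h : x < L) (m : ℕ) :
    frontState z ⟨x, h⟩ 0 m = ⟨z, pile L (x + 1) m⟩ := by
  simp only [frontState, Multiset.replicate_zero, zero_add, succSite, pile]
  split
  · rw [← Multiset.replicate_one, Multiset.nsmul_replicate, mul_one]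
  · rw [smul_zero]

theorem stabilize_pile (hpq : p + q = 1) (x a : ℕ) (z c : Fin L → Bool) :
    stabilize p q ⟨z, pile L x a⟩ c = sweep p q x a z c true + sweep p q x a z c false := by
  by_cases hx : x < L
  · cases a with
    | zero => simp [pile, stabilize_of_w_eq_zero, sweep_zero]
    | succ a =>
      have hfront : (⟨z, pile L x (a + 1)⟩ : State L) = frontState z ⟨x, hx⟩ (a + 1) 0 := by
        simp [pile, hx, frontState]
      rw [hfront, stabilize_frontState hpq, frontState_zero, frontState_zero,
        stabilize_pile hpq, stabilize_pile hpq, sweep_succ_of_lt p q hx, sweep_succ_of_lt p q hx,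
        zero_add]
      ring
  · rw [stabilize_of_w_eq_zero p q (by simp [pile, hx]), sweep_add_sweep_of_le p q (not_lt.mp hx)]
termination_by L - x

noncomputable def sweepMat (p q : ℝ) (L : ℕ) (e : Bool) : Matrix (Fin L → Bool) (Fin L → Bool) ℝ :=
  Matrix.of fun r c => sweep p q 0 1 r c e

theorem Wmat_eq_sweepMat_add (hpq : p + q = 1) :
    Wmat p q L = sweepMat p q L true + sweepMat p q L false := by
  ext r c
  exact stabilize_pile hpq 0 1 r c

end Bridge

section Freshness

variable {p q : ℝ}

theorem occupancy_of_sweepMat_false_pow_ne_zero {k : ℕ} {r c : Fin L → Bool}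
    (h : (sweepMat p q L false ^ k) r c ≠ 0) : occupancy c = occupancy r + k := by
  induction k generalizing c with
  | zero =>
    obtain rfl : r = c := by_contra fun hrc => h (by rw [pow_zero, Matrix.one_apply_ne hrc])
    rfl
  | succ k ih =>
    rw [pow_succ, Matrix.mul_apply] at h
    obtain ⟨m, -, hm⟩ := Finset.exists_ne_zero_of_sum_ne_zero h
    rw [occupancy_of_sweep_false_ne_zero (right_ne_zero_of_mul hm), ih (left_ne_zero_of_mul hm)]
    ring

theorem sweepMat_false_pow_eq_zero {k : ℕ} (hk : L < k) : sweepMat p q L false ^ k = 0 := by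
  ext r c
  by_contra h
  have := occupancy_of_sweepMat_false_pow_ne_zero h
  have := occupancy_le c
  omega


noncomputable def bernMat (p q : ℝ) : Matrix Bool Bool ℝ := Matrix.of fun _ b => bern p q b

theorem isIdempotentElem_bernMat (hpq : p + q = 1) : IsIdempotentElem (bernMat p q) := by
  ext b b'
  simp only [bernMat, Matrix.mul_apply, Matrix.of_apply, ← Finset.sum_mul, sum_bern hpq, one_mul]

abbrev snocEquiv (L : ℕ) : Bool × (Fin L → Bool) ≃ (Fin (L + 1) → Bool) :=
  Fin.snocEquiv fun _ => Bool

theorem snocEquiv_apply (b : Bool) (r : Fin L → Bool) : snocEquiv L (b, r) = Fin.snoc r b := rfl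

theorem Wmat_succ (hpq : p + q = 1) :
    Wmat p q (L + 1) = Matrix.reindex (snocEquiv L) (snocEquiv L)
      (bernMat p q ⊗ₖ Wmat p q L + (1 - bernMat p q) ⊗ₖ sweepMat p q L false) := by
  ext r c
  obtain ⟨⟨b, r⟩, rfl⟩ := (snocEquiv L).surjective r
  obtain ⟨⟨b', c⟩, rfl⟩ := (snocEquiv L).surjective c
  rw [Wmat_eq_sweepMat_add hpq, Wmat_eq_sweepMat_add hpq]
  simp only [Matrix.reindex_apply, Matrix.submatrix_apply, Equiv.symm_apply_apply,
    Matrix.add_apply, Matrix.kronecker_apply, Matrix.sub_apply, Matrix.one_apply, bernMat,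
    sweepMat, Matrix.of_apply]
  rw [snocEquiv_apply, snocEquiv_apply, sweep_snoc p q (Nat.zero_le L)]
  ring

theorem Wmat_pow_of_le (hpq : p + q = 1) :
    ∀ L τ : ℕ, L ≤ τ → Wmat p q L ^ τ = Matrix.of fun _ c => psi p q c
  | 0, τ, _ => by
    have hone : Wmat p q 0 = 1 := by
      ext r c
      simp only [Wmat_eq_sweepMat_add hpq, Matrix.add_apply, sweepMat, Matrix.of_apply]
      rw [sweep_add_sweep_of_le p q le_rfl, Subsingleton.elim r c, Matrix.one_apply_eq, if_pos rfl]
    ext r c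
    rw [hone, one_pow, Subsingleton.elim r c, Matrix.one_apply_eq]
    simp [psi]
  | L + 1, τ, hτ => by
    rw [Wmat_succ hpq, ← Matrix.coe_reindexRingEquiv, ← map_pow,
      Matrix.kronecker_add_one_sub_kronecker_pow (isIdempotentElem_bernMat hpq),
      Wmat_pow_of_le hpq L τ (by omega), sweepMat_false_pow_eq_zero (by omega),
      Matrix.kronecker_zero, add_zero]
    ext r c
    obtain ⟨⟨b', c⟩, rfl⟩ := (snocEquiv L).surjective c
    simp only [Matrix.coe_reindexRingEquiv, Matrix.reindex_apply, Matrix.submatrix_apply,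
      Equiv.symm_apply_apply, Matrix.kroneckerMap_apply, bernMat, Matrix.of_apply]
    rw [snocEquiv_apply, psi_snoc, mul_comm]

end Freshness

theorem scalar_observables_decorrelate_general
    (L : ℕ) (p q : ℝ) (hpq : p + q = 1)
    (A : (Fin L → Bool) → ℝ) (t τ : ℕ) (hτ : L ≤ τ) :
    (∑ r0 : Fin L → Bool, ∑ r1 : Fin L → Bool, ∑ r2 : Fin L → Bool,
        psi p q r0 * ((Wmat p q L) ^ t) r0 r1 * A r1 * ((Wmat p q L) ^ τ) r1 r2 * A r2)
      =
    (∑ r0 : Fin L → Bool, ∑ r1 : Fin L → Bool,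
        psi p q r0 * ((Wmat p q L) ^ t) r0 r1 * A r1) *
    (∑ r0 : Fin L → Bool, ∑ r1 : Fin L → Bool,
        psi p q r0 * ((Wmat p q L) ^ (t + τ)) r0 r1 * A r1) := by
  have hrows : ∀ n, L ≤ n → ∀ r c, (Wmat p q L ^ n) r c = psi p q c := fun n hn r c => by
    rw [Wmat_pow_of_le hpq L n hn, Matrix.of_apply]
  rw [Matrix.sum_sum_sum_eq_of_rows_eq _ _ _ (hrows τ hτ),
    Matrix.sum_sum_eq_of_rows_eq _ _ (hrows (t + τ) (by omega)), sum_psi hpq, one_mul]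

/-- finite-time decorrelation of scalar observables. For any
`A : {0,1}^L → ℝ`, any `t ≥ 0` and any `τ ≥ L`, in the stationary process
`E[A(z^t) A(z^{t+τ})] = E[A(z^t)] E[A(z^{t+τ})]`. -/
theorem scalar_observables_decorrelate
    (L : ℕ) (hL : 0 < L) (p q : ℝ) (hp : 0 < p) (hq : 0 < q) (hpq : p + q = 1)
    (A : (Fin L → Bool) → ℝ) (t τ : ℕ) (hτ : L ≤ τ) :
    (∑ r0 : Fin L → Bool, ∑ r1 : Fin L → Bool, ∑ r2 : Fin L → Bool,
        psi p q r0 * ((Wmat p q L) ^ t) r0 r1 * A r1 * ((Wmat p q L) ^ τ) r1 r2 * A r2)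
      =
    (∑ r0 : Fin L → Bool, ∑ r1 : Fin L → Bool,
        psi p q r0 * ((Wmat p q L) ^ t) r0 r1 * A r1) *
    (∑ r0 : Fin L → Bool, ∑ r1 : Fin L → Bool,
        psi p q r0 * ((Wmat p q L) ^ (t + τ)) r0 r1 * A r1) :=
  scalar_observables_decorrelate_general L p q hpq A t τ hτ

end DSS
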